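/- arXiv:1904.09404 — 3 statements merged into one kernel-verified Lean document; each statement's English description precedes it below -/
import Mathlib

section
/- For any action A and weight functions w ≤ U pointwise with values in [0,1] and prices p_i ∈ [0,1], the difference f(A,U) − f(A,w) is at most Σ_{i=1}^K (∏_{j<i} (1 − w(a_j,p_j))) · (U(a_i,p_i) − w(a_i,p_i)). (Per-step regret decomposition into observed item-wise UCB gaps.) -/
noncomputable def waterfallRevenue {K : ℕ} (p u : Fin K → ℝ) : ℝ :=
  ∑ i : Fin K, (∏ j ∈ Finset.univ.filter (fun j => j < i), (1 - u j)) * u i * p i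

/-! An item `i` is sold with probability `U i` if it is reached, and item `i` is reached when
all earlier items are declined. Peeling off the first item,
`f(U) - f(w) = (U₀ - w₀)(p₀ - f(tail U)) + (1 - w₀)(f(tail U) - f(tail w))`: the first summand is at
most `U₀ - w₀` since `p₀ ≤ 1 ≤ 1 + f(tail U)`, and the second is bounded by induction, the
factor `1 - w₀` being exactly the probability of reaching the second item under `w`. -/

open Finset

/-- The expectation of `g` at the item where a cascade stops, if it stops at each reached item `i`
with probability `u i`. -/
noncomputable def cascadeSum {K : ℕ} (u g : Fin K → ℝ) : ℝ :=
  ∑ i : Fin K, (∏ j ∈ univ.filter (fun j => j < i), (1 - u j)) * g i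

theorem Fin.prod_filter_lt_succ {M : Type*} [CommMonoid M] {K : ℕ} (f : Fin (K + 1) → M)
    (i : Fin K) :
    ∏ j ∈ univ.filter (fun j => j < i.succ), f j =
      f 0 * ∏ j ∈ univ.filter (fun j => j < i), f j.succ := by
  rw [prod_filter, prod_filter, Fin.prod_univ_succ]
  simp [Fin.succ_pos, Fin.succ_lt_succ_iff]

theorem cascadeSum_succ {K : ℕ} (u g : Fin (K + 1) → ℝ) :
    cascadeSum u g = g 0 + (1 - u 0) * cascadeSum (u ∘ Fin.succ) (g ∘ Fin.succ) := by
  rw [cascadeSum, Fin.sum_univ_succ, cascadeSum, mul_sum]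
  congr 1
  · simp
  · refine sum_congr rfl fun i _ => ?_
    rw [Fin.prod_filter_lt_succ]
    simp only [Function.comp_apply]
    ring

theorem cascadeSum_nonneg {K : ℕ} {u g : Fin K → ℝ} (hu : ∀ i, u i ≤ 1) (hg : ∀ i, 0 ≤ g i) :
    0 ≤ cascadeSum u g :=
  sum_nonneg fun i _ =>
    mul_nonneg (prod_nonneg fun j _ => sub_nonneg.mpr (hu j)) (hg i)

theorem waterfallRevenue_eq_cascadeSum {K : ℕ} (p u : Fin K → ℝ) :
    waterfallRevenue p u = cascadeSum u (fun i => u i * p i) := by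
  simp only [waterfallRevenue, cascadeSum, mul_assoc]

theorem waterfallRevenue_succ {K : ℕ} (p u : Fin (K + 1) → ℝ) :
    waterfallRevenue p u =
      u 0 * p 0 + (1 - u 0) * waterfallRevenue (p ∘ Fin.succ) (u ∘ Fin.succ) := by
  rw [waterfallRevenue_eq_cascadeSum, cascadeSum_succ, waterfallRevenue_eq_cascadeSum]
  rfl

theorem waterfallRevenue_nonneg {K : ℕ} {p u : Fin K → ℝ} (hp : ∀ i, 0 ≤ p i)
    (hu : ∀ i, u i ∈ Set.Icc (0 : ℝ) 1) : 0 ≤ waterfallRevenue p u := by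
  rw [waterfallRevenue_eq_cascadeSum]
  exact cascadeSum_nonneg (fun i => (hu i).2) fun i => mul_nonneg (hu i).1 (hp i)

theorem first_step_sub_le {a b p F G S : ℝ} (hba : b ≤ a) (ha : a ≤ 1) (hpF : p - F ≤ 1)
    (hFG : F - G ≤ S) :
    (a * p + (1 - a) * F) - (b * p + (1 - b) * G) ≤ (a - b) + (1 - b) * S :=
  calc (a * p + (1 - a) * F) - (b * p + (1 - b) * G)
      = (a - b) * (p - F) + (1 - b) * (F - G) := by ring
    _ ≤ (a - b) * 1 + (1 - b) * S := by
      gcongr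
      linarith
    _ = (a - b) + (1 - b) * S := by ring

theorem waterfall_regret_decomposition_general {K : ℕ} (p w U : Fin K → ℝ)
    (hp : ∀ i, p i ∈ Set.Icc (0 : ℝ) 1)
    (hU : ∀ i, U i ∈ Set.Icc (0 : ℝ) 1)
    (hwU : ∀ i, w i ≤ U i) :
    waterfallRevenue p U - waterfallRevenue p w ≤
      ∑ i : Fin K,
        (∏ j ∈ Finset.univ.filter (fun j => j < i), (1 - w j)) * (U i - w i) := by
  induction K with
  | zero => simp [waterfallRevenue]
  | succ K ih =>
    show _ ≤ cascadeSum w (fun i => U i - w i)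
    have tail_le : waterfallRevenue (p ∘ Fin.succ) (U ∘ Fin.succ) -
        waterfallRevenue (p ∘ Fin.succ) (w ∘ Fin.succ) ≤
        cascadeSum (w ∘ Fin.succ) ((fun i => U i - w i) ∘ Fin.succ) :=
      ih _ _ _ (fun i => hp _) (fun i => hU _) (fun i => hwU _)
    have tail_nonneg : 0 ≤ waterfallRevenue (p ∘ Fin.succ) (U ∘ Fin.succ) :=
      waterfallRevenue_nonneg (fun i => (hp i.succ).1) fun i => hU i.succ
    rw [waterfallRevenue_succ, waterfallRevenue_succ, cascadeSum_succ]
    exact first_step_sub_le (hwU 0) (hU 0).2 (by linarith [(hp 0).2]) tail_le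

/-- Per-step regret decomposition into observed item-wise UCB gaps. -/
theorem waterfall_regret_decomposition {K : ℕ} (p w U : Fin K → ℝ)
    (hp : ∀ i, p i ∈ Set.Icc (0 : ℝ) 1)
    (hw : ∀ i, w i ∈ Set.Icc (0 : ℝ) 1)
    (hU : ∀ i, U i ∈ Set.Icc (0 : ℝ) 1)
    (hwU : ∀ i, w i ≤ U i) :
    waterfallRevenue p U - waterfallRevenue p w ≤
      ∑ i : Fin K,
        (∏ j ∈ Finset.univ.filter (fun j => j < i), (1 - w j)) * (U i - w i) :=
  waterfall_regret_decomposition_general p w U hp hU hwU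
end

section
/- For a, b ∈ [0,1] (acceptance probabilities), prices p ≥ q in [0,1] and any tail value r ∈ [0, q], we have a·p + (1−a)(b·q + (1−b)·r) ≥ b·q + (1−b)(a·p + (1−a)·r); that is, swapping two adjacent items with prices in descending order so that the lower price comes first does not increase f. -/
/-- Exchange argument: with acceptance probabilities `a, b ∈ [0,1]`, prices
`p ≥ q` and tail value `r ∈ [0, q]`, offering the higher price first yields at
least as much expected revenue. -/
theorem waterfall_exchange (a b p q r : ℝ)
    (ha : a ∈ Set.Icc (0 : ℝ) 1) (hb : b ∈ Set.Icc (0 : ℝ) 1)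
    (hp : p ≤ 1) (hpq : q ≤ p) (hr0 : 0 ≤ r) (hrq : r ≤ q) :
    b * q + (1 - b) * (a * p + (1 - a) * r) ≤
      a * p + (1 - a) * (b * q + (1 - b) * r) := by
  obtain ⟨ha0, ha1⟩ := ha; obtain ⟨hb0, hb1⟩ := hb
  nlinarith [mul_nonneg ha0 hb0, mul_nonneg (mul_nonneg ha0 hb0) (sub_nonneg.2 hpq)]
end

section
/- In the greedy oracle with a single price per network p*(a) = argmax_{p∈Q} w̄(a,p)·p, the waterfall revenue of the greedy action is at least max_a max_{p∈Q} w̄(a,p)·p, i.e., at least the best single-network revenue. -/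
open Finset

theorem Finset.sum_Iic_prod_Iio_one_sub_mul {ι R : Type*} [LinearOrder ι] [LocallyFiniteOrderBot ι]
    [CommRing R] (u : ι → R) (i : ι) :
    ∑ j ∈ Iic i, (∏ k ∈ Iio j, (1 - u k)) * u j = 1 - ∏ j ∈ Iic i, (1 - u j) := by
  rw [prod_one_sub_ordered, sub_sub_cancel]
  refine sum_congr rfl fun j hj => ?_
  have hIio : {k ∈ Iic i | k < j} = Iio j := by
    ext k
    simp only [mem_filter, mem_Iic, mem_Iio, and_iff_right_iff_imp]
    exact fun hkj => hkj.le.trans (mem_Iic.1 hj)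
  rw [hIio, mul_comm]

section Waterfall

variable {K : ℕ} {p u : Fin K → ℝ}

theorem one_sub_prod_mul_le_waterfallRevenue (hp : Antitone p) (hp₀ : ∀ j, 0 ≤ p j)
    (hu : ∀ j, u j ∈ Set.Icc (0 : ℝ) 1) (i : Fin K) :
    (1 - ∏ j ∈ Iic i, (1 - u j)) * p i ≤ waterfallRevenue p u := by
  have hw : ∀ j, 0 ≤ (∏ k ∈ Iio j, (1 - u k)) * u j := fun j =>
    mul_nonneg (prod_nonneg fun k _ => sub_nonneg.2 (hu k).2) (hu j).1
  unfold waterfallRevenue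
  simp only [filter_gt_eq_Iio]
  calc (1 - ∏ j ∈ Iic i, (1 - u j)) * p i
      = ∑ j ∈ Iic i, (∏ k ∈ Iio j, (1 - u k)) * u j * p i := by
        rw [← sum_Iic_prod_Iio_one_sub_mul, sum_mul]
    _ ≤ ∑ j ∈ Iic i, (∏ k ∈ Iio j, (1 - u k)) * u j * p j :=
        sum_le_sum fun j hj => mul_le_mul_of_nonneg_left (hp (mem_Iic.1 hj)) (hw j)
    _ ≤ ∑ j, (∏ k ∈ Iio j, (1 - u k)) * u j * p j :=
        sum_le_sum_of_subset_of_nonneg (subset_univ _) fun j _ _ => mul_nonneg (hw j) (hp₀ j)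

theorem mul_le_waterfallRevenue (hp : Antitone p) (hp₀ : ∀ j, 0 ≤ p j)
    (hu : ∀ j, u j ∈ Set.Icc (0 : ℝ) 1) (i : Fin K) :
    u i * p i ≤ waterfallRevenue p u := by
  have hprod : ∏ j ∈ Iic i, (1 - u j) ≤ 1 - u i := by
    rw [← Iio_insert, prod_insert notMem_Iio_self]
    refine mul_le_of_le_one_right (sub_nonneg.2 (hu i).2) (prod_le_one ?_ ?_)
    · exact fun k _ => sub_nonneg.2 (hu k).2
    · exact fun k _ => sub_le_self _ (hu k).1
  refine le_trans ?_ (one_sub_prod_mul_le_waterfallRevenue hp hp₀ hu i)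
  exact mul_le_mul_of_nonneg_right (by linarith) (hp₀ i)

end Waterfall

theorem greedy_ge_best_single_network_general {K : ℕ}
    (Q : Finset ℝ) (hQ01 : ∀ q ∈ Q, q ∈ Set.Icc (0 : ℝ) 1)
    (wbar : Fin K → ℝ → ℝ)
    (hwbar : ∀ a q, q ∈ Q → wbar a q ∈ Set.Icc (0 : ℝ) 1)
    (pstar : Fin K → ℝ)
    (hpstarQ : ∀ a, pstar a ∈ Q)
    (hpstar : ∀ a, ∀ q ∈ Q, wbar a q * q ≤ wbar a (pstar a) * pstar a)
    (π : Equiv.Perm (Fin K))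
    (hdesc : ∀ i j : Fin K, i ≤ j → pstar (π j) ≤ pstar (π i)) :
    ∀ a : Fin K, ∀ q ∈ Q,
      wbar a q * q ≤
        waterfallRevenue (fun i => pstar (π i)) (fun i => wbar (π i) (pstar (π i))) := by
  intro a q hq
  calc wbar a q * q ≤ wbar a (pstar a) * pstar a := hpstar a q hq
    _ = wbar (π (π.symm a)) (pstar (π (π.symm a))) * pstar (π (π.symm a)) := by
        rw [π.apply_symm_apply]
    _ ≤ _ := mul_le_waterfallRevenue (fun i j hij => hdesc i j hij)
        (fun i => (hQ01 _ (hpstarQ _)).1) (fun i => hwbar _ _ (hpstarQ _)) (π.symm a)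

/-- The greedy oracle's waterfall revenue is at least the best single-network
revenue `max_a max_{p∈Q} w̄(a,p)·p`. -/
theorem greedy_ge_best_single_network {K : ℕ} (hK : 0 < K)
    (Q : Finset ℝ) (hQ : Q.Nonempty) (hQ01 : ∀ q ∈ Q, q ∈ Set.Icc (0 : ℝ) 1)
    (wbar : Fin K → ℝ → ℝ)
    (hwbar : ∀ a q, q ∈ Q → wbar a q ∈ Set.Icc (0 : ℝ) 1)
    (pstar : Fin K → ℝ)
    (hpstarQ : ∀ a, pstar a ∈ Q)
    (hpstar : ∀ a, ∀ q ∈ Q, wbar a q * q ≤ wbar a (pstar a) * pstar a)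
    (π : Equiv.Perm (Fin K))
    (hdesc : ∀ i j : Fin K, i ≤ j → pstar (π j) ≤ pstar (π i)) :
    ∀ a : Fin K, ∀ q ∈ Q,
      wbar a q * q ≤
        waterfallRevenue (fun i => pstar (π i)) (fun i => wbar (π i) (pstar (π i))) :=
  greedy_ge_best_single_network_general Q hQ01 wbar hwbar pstar hpstarQ hpstar π hdesc
end
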